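/- Let Ω, ∂Ω, σ, n, q be as in the context. Let φ, ψ : ℝ^d → ℝ be C² on a neighborhood of the closure of Ω, satisfying −Δφ = E_φ·φ and −Δψ = E_ψ·ψ on Ω, with ∫_Ω φ(x)² dx = 1 and either φ = ψ or ∫_Ω φ(x)·ψ(x) dx = 0. Assume both φ and ψ satisfy the mixed homogeneous boundary conditions: there are a subset Γ_D ⊆ ∂Ω and a function γ : ∂Ω → ℝ such that φ and ψ vanish on Γ_D and γ(x)·φ(x) + ⟨n(x),∇φ(x)⟩ = 0 and γ(x)·ψ(x) + ⟨n(x),∇ψ(x)⟩ = 0 for all x ∈ ∂Ω ∖ Γ_D. Then q(φ,ψ; E_φ+E_ψ) = (2E_φ if φ = ψ, and 0 otherwise) + ((E_φ−E_ψ)²/4)·∫_Ω ‖x‖²·φ(x)·ψ(x) dx. -/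

import Mathlib

open MeasureTheory
open scoped RealInnerProductSpace Classical

noncomputable section

/-- The Euclidean Laplacian: the sum of the second partial derivatives. -/
def lap {d : ℕ} (u : EuclideanSpace ℝ (Fin d) → ℝ) (x : EuclideanSpace ℝ (Fin d)) : ℝ :=
  ∑ i, fderiv ℝ (fun y => fderiv ℝ u y (EuclideanSpace.single i (1:ℝ))) x
    (EuclideanSpace.single i (1:ℝ))

/-- The divergence: the sum of the partial derivatives of the components. -/
def divg {d : ℕ} (F : EuclideanSpace ℝ (Fin d) → EuclideanSpace ℝ (Fin d))
    (x : EuclideanSpace ℝ (Fin d)) : ℝ :=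
  ∑ i, fderiv ℝ (fun y => ⟪F y, EuclideanSpace.single i (1:ℝ)⟫) x
    (EuclideanSpace.single i (1:ℝ))

/-- The boundary bilinear form `q(u, v; 𝓔)`. -/
def qform (d : ℕ) (Ω : Set (EuclideanSpace ℝ (Fin d)))
    (n : EuclideanSpace ℝ (Fin d) → EuclideanSpace ℝ (Fin d))
    (u v : EuclideanSpace ℝ (Fin d) → ℝ) (cE : ℝ) : ℝ :=
  ∫ x in frontier Ω,
    (((d : ℝ) - 2) / 2 * (⟪n x, gradient u x⟫ * v x + ⟪n x, gradient v x⟫ * u x)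
      + ⟪x, n x⟫ * (cE / 2 * u x * v x - ⟪gradient u x, gradient v x⟫)
      + ⟪x, gradient u x⟫ * ⟪n x, gradient v x⟫
      + ⟪x, gradient v x⟫ * ⟪n x, gradient u x⟫) ∂(μH[(d:ℝ) - 1])

/-!
Green's formula for the Rellich–Pohozaev field `rellichField (a + b) φ ψ`, whose flux density is
the integrand of `q`, gives for eigenfunctions `-Δφ = aφ`, `-Δψ = bψ`
  `q(φ, ψ; a + b) = (a + b) ∫ φψ + (a - b)/2 ∫ ⟪x, W⟫`,   `W = ψ∇φ - φ∇ψ`: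
the coefficient `(d - 2)/2` cancels the `⟪∇φ, ∇ψ⟫` terms and the symmetry of the Hessians the
second-order ones. Green's formula for `‖x‖² W`, whose flux vanishes under the mixed boundary
conditions, gives `2 ∫ ⟪x, W⟫ = (a - b) ∫ ‖x‖² φψ`. Finally `∫ φψ` is `1` or `0`, and `φ = ψ`
forces `a = b` because `φ ≠ 0`.
-/

open scoped Gradient

section RellichIdentity

variable {d : ℕ}

local notation "E" => EuclideanSpace ℝ (Fin d)

attribute [local fun_prop] DifferentiableAt.inner ContDiffOn.inner

lemma divg_add {F G : E → E} {x : E} (hF : DifferentiableAt ℝ F x)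
    (hG : DifferentiableAt ℝ G x) :
    divg (fun y => F y + G y) x = divg F x + divg G x := by
  simp only [divg, inner_add_left, ← Finset.sum_add_distrib]
  refine Finset.sum_congr rfl fun i _ => ?_
  rw [fderiv_fun_add (hF.inner ℝ (differentiableAt_const _))
    (hG.inner ℝ (differentiableAt_const _))]
  rfl

lemma divg_sub {F G : E → E} {x : E} (hF : DifferentiableAt ℝ F x)
    (hG : DifferentiableAt ℝ G x) :
    divg (fun y => F y - G y) x = divg F x - divg G x := by
  simp only [divg, inner_sub_left, ← Finset.sum_sub_distrib]
  refine Finset.sum_congr rfl fun i _ => ?_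
  rw [fderiv_fun_sub (hF.inner ℝ (differentiableAt_const _))
    (hG.inner ℝ (differentiableAt_const _))]
  rfl

lemma divg_smul {f : E → ℝ} {F : E → E} {x : E} (hf : DifferentiableAt ℝ f x)
    (hF : DifferentiableAt ℝ F x) :
    divg (fun y => f y • F y) x = f x * divg F x + fderiv ℝ f x (F x) := by
  simp only [divg, real_inner_smul_left, fderiv_fun_mul hf (hF.inner ℝ (differentiableAt_const _)),
    add_apply, smul_apply, smul_eq_mul, Finset.sum_add_distrib, ← Finset.mul_sum]
  congr 1
  conv_rhs => rw [← (EuclideanSpace.basisFun (Fin d) ℝ).sum_repr' (F x)]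
  simp [EuclideanSpace.basisFun_apply, real_inner_comm]

lemma divg_gradient (u : E → ℝ) : divg (∇ u) = lap u := by
  funext x
  simp only [divg, lap, inner_gradient_left]

lemma divg_id (x : E) : divg (fun y => y) x = d := by
  simp only [divg, fderiv_inner_apply ℝ differentiableAt_fun_id (differentiableAt_const _)]
  simp

variable {u v : EuclideanSpace ℝ (Fin d) → ℝ} {x : EuclideanSpace ℝ (Fin d)}

lemma ContDiffAt.differentiableAt_gradient (hu : ContDiffAt ℝ 2 u x) :
    DifferentiableAt ℝ (∇ u) x :=
  (InnerProductSpace.toDual ℝ E).symm.toContinuousLinearEquiv.differentiableAt.comp x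
    ((hu.fderiv_right one_add_one_eq_two.le).differentiableAt one_ne_zero)

lemma ContDiffAt.inner_fderiv_gradient (hu : ContDiffAt ℝ 2 u x) (w w' : E) :
    ⟪fderiv ℝ (∇ u) x w, w'⟫ = fderiv ℝ (fderiv ℝ u) x w w' := by
  have h := fderiv_inner_apply ℝ hu.differentiableAt_gradient (differentiableAt_const w') w
  simp only [fderiv_fun_const, Pi.zero_apply, zero_apply, inner_zero_right, zero_add,
    inner_gradient_left] at h
  rw [← h, fderiv_clm_apply ((hu.fderiv_right one_add_one_eq_two.le).differentiableAt one_ne_zero)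
    (differentiableAt_const w')]
  simp

lemma ContDiffAt.inner_fderiv_gradient_comm (hu : ContDiffAt ℝ 2 u x) (w w' : E) :
    ⟪fderiv ℝ (∇ u) x w, w'⟫ = ⟪w, fderiv ℝ (∇ u) x w'⟫ := by
  rw [real_inner_comm _ w, hu.inner_fderiv_gradient, hu.inner_fderiv_gradient]
  exact hu.isSymmSndFDerivAt (by simp) w w'

lemma ContDiffOn.gradient_of_isOpen {U : Set E} (hu : ContDiffOn ℝ 2 u U) (hU : IsOpen U) :
    ContDiffOn ℝ 1 (∇ u) U :=
  (InnerProductSpace.toDual ℝ E).symm.toContinuousLinearEquiv.contDiff.comp_contDiffOn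
    (hu.fderiv_of_isOpen hU le_rfl)

def rellichField (cE : ℝ) (u v : E → ℝ) (y : E) : E :=
  (((d : ℝ) - 2) / 2) • (v y • ∇ u y + u y • ∇ v y)
    + (cE / 2 * (u y * v y) - ⟪∇ u y, ∇ v y⟫) • y
    + ⟪y, ∇ u y⟫ • ∇ v y + ⟪y, ∇ v y⟫ • ∇ u y

lemma qform_eq_integral_inner_rellichField (Ω : Set E) (n : E → E) (u v : E → ℝ) (cE : ℝ) :
    qform d Ω n u v cE = ∫ x in frontier Ω, ⟪rellichField cE u v x, n x⟫ ∂μH[(d : ℝ) - 1] := by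
  unfold qform
  congr 1
  funext x
  simp only [rellichField, inner_add_left, real_inner_smul_left]
  rw [real_inner_comm (∇ u x), real_inner_comm (∇ v x)]
  ring

lemma divg_rellichField (hu : ContDiffAt ℝ 2 u x) (hv : ContDiffAt ℝ 2 v x) (cE : ℝ) :
    divg (rellichField cE u v) x =
      ((d : ℝ) - 2) / 2 * (v x * lap u x + u x * lap v x) + d * (cE / 2) * (u x * v x)
        + cE / 2 * (v x * ⟪x, ∇ u x⟫ + u x * ⟪x, ∇ v x⟫)
        + ⟪x, ∇ u x⟫ * lap v x + ⟪x, ∇ v x⟫ * lap u x := by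
  have du := hu.differentiableAt two_ne_zero
  have dv := hv.differentiableAt two_ne_zero
  have dgu := hu.differentiableAt_gradient
  have dgv := hv.differentiableAt_gradient
  unfold rellichField
  rw [divg_add (by fun_prop) (by fun_prop), divg_add (by fun_prop) (by fun_prop),
    divg_add (by fun_prop) (by fun_prop), divg_smul (by fun_prop) (by fun_prop),
    divg_add (by fun_prop) (by fun_prop), divg_smul dv dgu, divg_smul du dgv,
    divg_smul (by fun_prop) differentiableAt_fun_id, divg_smul (by fun_prop) dgv,
    divg_smul (by fun_prop) dgu, divg_gradient, divg_gradient, divg_id,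
    fderiv_fun_sub (by fun_prop) (by fun_prop), fderiv_const_mul (by fun_prop),
    fderiv_fun_mul du dv]
  simp only [fderiv_fun_const, Pi.zero_apply, zero_apply, sub_apply, smul_apply, add_apply,
    smul_eq_mul, fderiv_inner_apply ℝ dgu dgv, fderiv_inner_apply ℝ differentiableAt_fun_id dgu,
    fderiv_inner_apply ℝ differentiableAt_fun_id dgv, fderiv_fun_id,
    ContinuousLinearMap.id_apply, ← inner_gradient_left]
  rw [real_inner_comm (fderiv ℝ (∇ v) x x), hv.inner_fderiv_gradient_comm,
    hu.inner_fderiv_gradient_comm, real_inner_comm (∇ u x) (∇ v x), real_inner_comm x (∇ u x),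
    real_inner_comm x (∇ v x)]
  ring

lemma contDiffOn_rellichField {U : Set E} (hu : ContDiffOn ℝ 2 u U) (hv : ContDiffOn ℝ 2 v U)
    (hU : IsOpen U) (cE : ℝ) : ContDiffOn ℝ 1 (rellichField cE u v) U := by
  have hu1 : ContDiffOn ℝ 1 u U := hu.of_le one_le_two
  have hv1 : ContDiffOn ℝ 1 v U := hv.of_le one_le_two
  have hgu := hu.gradient_of_isOpen hU
  have hgv := hv.gradient_of_isOpen hU
  unfold rellichField
  fun_prop

def wronskianField (u v : E → ℝ) (y : E) : E := v y • ∇ u y - u y • ∇ v y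

lemma inner_wronskianField (w : E) :
    ⟪w, wronskianField u v x⟫ = v x * ⟪w, ∇ u x⟫ - u x * ⟪w, ∇ v x⟫ := by
  simp only [wronskianField, inner_sub_right, real_inner_smul_right]

lemma inner_wronskianField_eq_zero_of_robin {ν : E} {γ : ℝ} (hu : γ * u x + ⟪ν, ∇ u x⟫ = 0)
    (hv : γ * v x + ⟪ν, ∇ v x⟫ = 0) : ⟪wronskianField u v x, ν⟫ = 0 := by
  rw [real_inner_comm, inner_wronskianField]
  linear_combination v x * hu - u x * hv

lemma divg_wronskianField (hu : ContDiffAt ℝ 2 u x) (hv : ContDiffAt ℝ 2 v x) :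
    divg (wronskianField u v) x = v x * lap u x - u x * lap v x := by
  have du := hu.differentiableAt two_ne_zero
  have dv := hv.differentiableAt two_ne_zero
  have dgu := hu.differentiableAt_gradient
  have dgv := hv.differentiableAt_gradient
  unfold wronskianField
  rw [divg_sub (by fun_prop) (by fun_prop), divg_smul dv dgu, divg_smul du dgv, divg_gradient,
    divg_gradient, ← inner_gradient_left, ← inner_gradient_left, real_inner_comm (∇ u x)]
  ring

lemma divg_norm_sq_smul_wronskianField (hu : ContDiffAt ℝ 2 u x) (hv : ContDiffAt ℝ 2 v x) :
    divg (fun y => ‖y‖ ^ 2 • wronskianField u v y) x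
      = ‖x‖ ^ 2 * (v x * lap u x - u x * lap v x) + 2 * ⟪x, wronskianField u v x⟫ := by
  have dW : DifferentiableAt ℝ (wronskianField u v) x := by
    have du := hu.differentiableAt two_ne_zero
    have dv := hv.differentiableAt two_ne_zero
    have dgu := hu.differentiableAt_gradient
    have dgv := hv.differentiableAt_gradient
    unfold wronskianField
    fun_prop
  have hN := (hasStrictFDerivAt_norm_sq x).hasFDerivAt
  rw [divg_smul hN.differentiableAt dW, divg_wronskianField hu hv, hN.fderiv]
  simp

lemma contDiffOn_wronskianField {U : Set E} (hu : ContDiffOn ℝ 2 u U) (hv : ContDiffOn ℝ 2 v U)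
    (hU : IsOpen U) : ContDiffOn ℝ 1 (wronskianField u v) U := by
  have hu1 : ContDiffOn ℝ 1 u U := hu.of_le one_le_two
  have hv1 : ContDiffOn ℝ 1 v U := hv.of_le one_le_two
  have hgu := hu.gradient_of_isOpen hU
  have hgv := hv.gradient_of_isOpen hU
  unfold wronskianField
  fun_prop

variable {Ω U : Set (EuclideanSpace ℝ (Fin d))}
  {n : EuclideanSpace ℝ (Fin d) → EuclideanSpace ℝ (Fin d)} {φ ψ : EuclideanSpace ℝ (Fin d) → ℝ}
  {a b : ℝ}

lemma integral_inner_wronskianField (hΩo : IsOpen Ω) (hΩb : Bornology.IsBounded Ω)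
    (hGG : ∀ F : E → E, (∃ U, IsOpen U ∧ closure Ω ⊆ U ∧ ContDiffOn ℝ 1 F U) →
      (∫ x in Ω, divg F x) = ∫ x in frontier Ω, ⟪F x, n x⟫ ∂(μH[(d:ℝ) - 1]))
    (hU : IsOpen U) (hΩU : closure Ω ⊆ U) (hφ : ContDiffOn ℝ 2 φ U) (hψ : ContDiffOn ℝ 2 ψ U)
    (hHφ : ∀ x ∈ Ω, -lap φ x = a * φ x) (hHψ : ∀ x ∈ Ω, -lap ψ x = b * ψ x)
    (hflux : ∀ x ∈ frontier Ω, ⟪wronskianField φ ψ x, n x⟫ = 0) :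
    ∫ x in Ω, ⟪x, wronskianField φ ψ x⟫ = (a - b) / 2 * ∫ x in Ω, ‖x‖ ^ 2 * φ x * ψ x := by
  have hint : ∀ f : E → ℝ, ContinuousOn f U → IntegrableOn f Ω := fun f hf =>
    ((hf.mono hΩU).integrableOn_compact hΩb.isCompact_closure).mono_set subset_closure
  have hdiv : ∀ x ∈ Ω, divg (fun y => ‖y‖ ^ 2 • wronskianField φ ψ y) x
      = (b - a) * (‖x‖ ^ 2 * φ x * ψ x) + 2 * ⟪x, wronskianField φ ψ x⟫ := fun x hx => by
    have hxU := hΩU (subset_closure hx)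
    rw [divg_norm_sq_smul_wronskianField (hφ.contDiffAt (hU.mem_nhds hxU))
      (hψ.contDiffAt (hU.mem_nhds hxU))]
    linear_combination (-‖x‖ ^ 2 * ψ x) * hHφ x hx + (‖x‖ ^ 2 * φ x) * hHψ x hx
  have hW := contDiffOn_wronskianField hφ hψ hU
  have hGreen := hGG (fun y => ‖y‖ ^ 2 • wronskianField φ ψ y)
    ⟨U, hU, hΩU, (contDiff_norm_sq ℝ).contDiffOn.smul hW⟩
  have hflux0 : ∫ x in frontier Ω, ⟪‖x‖ ^ 2 • wronskianField φ ψ x, n x⟫ ∂μH[(d : ℝ) - 1] = 0 :=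
    setIntegral_eq_zero_of_forall_eq_zero fun x hx => by
      rw [real_inner_smul_left, hflux x hx, mul_zero]
  have hWc : ContinuousOn (fun x => ⟪x, wronskianField φ ψ x⟫) U :=
    (contDiffOn_id.inner ℝ hW).continuousOn
  have hMc : ContinuousOn (fun x : E => ‖x‖ ^ 2 * φ x * ψ x) U := by
    have := hφ.continuousOn
    have := hψ.continuousOn
    fun_prop
  rw [hflux0, setIntegral_congr_fun hΩo.measurableSet hdiv,
    integral_add ((hint _ hMc).const_mul _) ((hint _ hWc).const_mul _), integral_const_mul,
    integral_const_mul] at hGreen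
  linear_combination hGreen / 2

lemma qform_eq_of_neg_lap_eq_mul (hΩo : IsOpen Ω) (hΩb : Bornology.IsBounded Ω)
    (hGG : ∀ F : E → E, (∃ U, IsOpen U ∧ closure Ω ⊆ U ∧ ContDiffOn ℝ 1 F U) →
      (∫ x in Ω, divg F x) = ∫ x in frontier Ω, ⟪F x, n x⟫ ∂(μH[(d:ℝ) - 1]))
    (hU : IsOpen U) (hΩU : closure Ω ⊆ U) (hφ : ContDiffOn ℝ 2 φ U) (hψ : ContDiffOn ℝ 2 ψ U)
    (hHφ : ∀ x ∈ Ω, -lap φ x = a * φ x) (hHψ : ∀ x ∈ Ω, -lap ψ x = b * ψ x) :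
    qform d Ω n φ ψ (a + b) = (a + b) * (∫ x in Ω, φ x * ψ x)
      + (a - b) / 2 * ∫ x in Ω, ⟪x, wronskianField φ ψ x⟫ := by
  have hint : ∀ f : E → ℝ, ContinuousOn f U → IntegrableOn f Ω := fun f hf =>
    ((hf.mono hΩU).integrableOn_compact hΩb.isCompact_closure).mono_set subset_closure
  have hdiv : ∀ x ∈ Ω, divg (rellichField (a + b) φ ψ) x
      = (a + b) * (φ x * ψ x) + (a - b) / 2 * ⟪x, wronskianField φ ψ x⟫ := fun x hx => by
    have hxU := hΩU (subset_closure hx)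
    rw [divg_rellichField (hφ.contDiffAt (hU.mem_nhds hxU)) (hψ.contDiffAt (hU.mem_nhds hxU)),
      inner_wronskianField]
    linear_combination (-(((d : ℝ) - 2) / 2 * ψ x + ⟪x, ∇ ψ x⟫)) * hHφ x hx
      + (-(((d : ℝ) - 2) / 2 * φ x + ⟪x, ∇ φ x⟫)) * hHψ x hx
  have hGreen := hGG _ ⟨U, hU, hΩU, contDiffOn_rellichField hφ hψ hU (a + b)⟩
  have hPc : ContinuousOn (fun x => φ x * ψ x) U := hφ.continuousOn.mul hψ.continuousOn
  have hWc : ContinuousOn (fun x => ⟪x, wronskianField φ ψ x⟫) U :=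
    (contDiffOn_id.inner ℝ (contDiffOn_wronskianField hφ hψ hU)).continuousOn
  rw [qform_eq_integral_inner_rellichField, ← hGreen, setIntegral_congr_fun hΩo.measurableSet hdiv,
    integral_add ((hint _ hPc).const_mul _) ((hint _ hWc).const_mul _), integral_const_mul,
    integral_const_mul]

lemma eq_of_neg_lap_eq_mul (ha : ∀ x ∈ Ω, -lap φ x = a * φ x)
    (hb : ∀ x ∈ Ω, -lap φ x = b * φ x) (hφ : ∫ x in Ω, φ x ^ 2 ≠ 0) : a = b := by
  by_contra hab
  refine hφ (setIntegral_eq_zero_of_forall_eq_zero fun x hx => ?_)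
  have h : (a - b) * φ x = 0 := by linear_combination hb x hx - ha x hx
  simp [(mul_eq_zero.1 h).resolve_left (sub_ne_zero.2 hab)]

end RellichIdentity

theorem quasi_orthogonality_identity_general
    (d : ℕ) (Ω : Set (EuclideanSpace ℝ (Fin d)))
    (hΩo : IsOpen Ω) (hΩb : Bornology.IsBounded Ω)
    (n : EuclideanSpace ℝ (Fin d) → EuclideanSpace ℝ (Fin d))
    (hGG : ∀ F : EuclideanSpace ℝ (Fin d) → EuclideanSpace ℝ (Fin d),
      (∃ U, IsOpen U ∧ closure Ω ⊆ U ∧ ContDiffOn ℝ 1 F U) →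
      (∫ x in Ω, divg F x) = ∫ x in frontier Ω, ⟪F x, n x⟫ ∂(μH[(d:ℝ) - 1]))
    (φ ψ : EuclideanSpace ℝ (Fin d) → ℝ) (Eφ Eψ : ℝ)
    (hφr : ∃ U, IsOpen U ∧ closure Ω ⊆ U ∧ ContDiffOn ℝ 2 φ U) (hψr : ∃ U, IsOpen U ∧ closure Ω ⊆ U ∧ ContDiffOn ℝ 2 ψ U)
    (hHφ : ∀ x ∈ Ω, -lap φ x = Eφ * φ x) (hHψ : ∀ x ∈ Ω, -lap ψ x = Eψ * ψ x)
    (hφnorm : (∫ x in Ω, (φ x) ^ 2) = 1)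
    (horth : φ = ψ ∨ (∫ x in Ω, φ x * ψ x) = 0)
    (hbc : ∃ ΓD ⊆ frontier Ω, ∃ γ : EuclideanSpace ℝ (Fin d) → ℝ,
      (∀ x ∈ ΓD, φ x = 0 ∧ ψ x = 0) ∧
      ∀ x ∈ frontier Ω \ ΓD,
        γ x * φ x + ⟪n x, gradient φ x⟫ = 0 ∧
        γ x * ψ x + ⟪n x, gradient ψ x⟫ = 0)
    :
    qform d Ω n φ ψ (Eφ + Eψ)
      = (if φ = ψ then 2 * Eφ else 0)
        + (Eφ - Eψ) ^ 2 / 4 * ∫ x in Ω, ‖x‖ ^ 2 * φ x * ψ x := by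
  obtain ⟨U₁, hU₁, hΩU₁, hφ⟩ := hφr
  obtain ⟨U₂, hU₂, hΩU₂, hψ⟩ := hψr
  have hU := hU₁.inter hU₂
  have hΩU := Set.subset_inter hΩU₁ hΩU₂
  replace hφ : ContDiffOn ℝ 2 φ (U₁ ∩ U₂) := hφ.mono Set.inter_subset_left
  replace hψ : ContDiffOn ℝ 2 ψ (U₁ ∩ U₂) := hψ.mono Set.inter_subset_right
  have hflux : ∀ x ∈ frontier Ω, ⟪wronskianField φ ψ x, n x⟫ = 0 := by
    obtain ⟨ΓD, -, γ, hD, hR⟩ := hbc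
    intro x hx
    by_cases hxD : x ∈ ΓD
    · simp [wronskianField, (hD x hxD).1, (hD x hxD).2]
    · exact inner_wronskianField_eq_zero_of_robin (hR x ⟨hx, hxD⟩).1 (hR x ⟨hx, hxD⟩).2
  rw [qform_eq_of_neg_lap_eq_mul hΩo hΩb hGG hU hΩU hφ hψ hHφ hHψ,
    integral_inner_wronskianField hΩo hΩb hGG hU hΩU hφ hψ hHφ hHψ hflux]
  split_ifs with hφψ
  · subst hφψ
    have hE := eq_of_neg_lap_eq_mul hHφ hHψ (by rw [hφnorm]; exact one_ne_zero)
    simp only [← pow_two, hφnorm, hE]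
    ring
  · rw [horth.resolve_left hφψ]
    ring

theorem quasi_orthogonality_identity
    (d : ℕ) (hd : 2 ≤ d) (Ω : Set (EuclideanSpace ℝ (Fin d)))
    (hΩo : IsOpen Ω) (hΩb : Bornology.IsBounded Ω)
    (n : EuclideanSpace ℝ (Fin d) → EuclideanSpace ℝ (Fin d))
    (hGG : ∀ F : EuclideanSpace ℝ (Fin d) → EuclideanSpace ℝ (Fin d),
      (∃ U, IsOpen U ∧ closure Ω ⊆ U ∧ ContDiffOn ℝ 1 F U) →
      (∫ x in Ω, divg F x) = ∫ x in frontier Ω, ⟪F x, n x⟫ ∂(μH[(d:ℝ) - 1]))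
    (φ ψ : EuclideanSpace ℝ (Fin d) → ℝ) (Eφ Eψ : ℝ)
    (hφr : ∃ U, IsOpen U ∧ closure Ω ⊆ U ∧ ContDiffOn ℝ 2 φ U) (hψr : ∃ U, IsOpen U ∧ closure Ω ⊆ U ∧ ContDiffOn ℝ 2 ψ U)
    (hHφ : ∀ x ∈ Ω, -lap φ x = Eφ * φ x) (hHψ : ∀ x ∈ Ω, -lap ψ x = Eψ * ψ x)
    (hφnorm : (∫ x in Ω, (φ x) ^ 2) = 1)
    (horth : φ = ψ ∨ (∫ x in Ω, φ x * ψ x) = 0)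
    (hbc : ∃ ΓD ⊆ frontier Ω, ∃ γ : EuclideanSpace ℝ (Fin d) → ℝ,
      (∀ x ∈ ΓD, φ x = 0 ∧ ψ x = 0) ∧
      ∀ x ∈ frontier Ω \ ΓD,
        γ x * φ x + ⟪n x, gradient φ x⟫ = 0 ∧
        γ x * ψ x + ⟪n x, gradient ψ x⟫ = 0)
    :
    qform d Ω n φ ψ (Eφ + Eψ)
      = (if φ = ψ then 2 * Eφ else 0)
        + (Eφ - Eψ) ^ 2 / 4 * ∫ x in Ω, ‖x‖ ^ 2 * φ x * ψ x :=
  quasi_orthogonality_identity_general d Ω hΩo hΩb n hGG φ ψ Eφ Eψ hφr hψr hHφ hHψ hφnorm horth hbc
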